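/- Let 0 ≤ j ≤ k ≤ ℓ be integers, set k′ = k−j, ℓ′ = ℓ−j and m = k+ℓ−j. Let F, G : ℋ → ℂ be smooth functions, and on ℋ × ℂ^m (coordinates (τ, z₁,…,z_m)) define the (k+ℓ+2)-form Θ = (−1)^{k+ℓ+1} (2πi)^{k+ℓ+2} F(τ) conj(G(τ)) dτ ∧ dτ̄ ∧ dz₁ ∧ ⋯ ∧ dz_k ∧ dz̄_{k′+1} ∧ ⋯ ∧ dz̄_m. For 0 ≤ a ≤ k′+ℓ′, let ψ_a be the (k′+ℓ′)-form ψ_a = (1/(k′+ℓ′)!) Σ_{σ∈𝔖_{k′+ℓ′}} sgn(σ) dζ̄_{σ(1)} ∧ ⋯ ∧ dζ̄_{σ(a)} ∧ dζ_{σ(a+1)} ∧ ⋯ ∧ dζ_{σ(k′+ℓ′)}, where (ζ₁,…,ζ_{k′+ℓ′}) = (z₁,…,z_{k′}, z_{k+1},…,z_m). Then ψ_a ∧ Θ = 0 whenever a ≠ k′, and ψ_{k′} ∧ Θ = C₁ · F(τ) conj(G(τ)) dτ ∧ dτ̄ ∧ (dz₁ ∧ dz̄₁) ∧ ⋯ ∧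 (dz_m ∧ dz̄_m), where C₁ = (−1)^{k+ℓ+1+k′²+j(k′+ℓ′)+(k′+j+ℓ′)(k′+j+ℓ′−1)/2} · (k′! · ℓ′! / (k′+ℓ′)!) · (2πi)^{k+ℓ+2}. -/

import Mathlib

open Complex

noncomputable section

/-- The module of coefficients of complex-valued 1-forms on a complex manifold with
coordinates indexed by `ι`: the `Sum.inl` basis vectors are the symbols `dz_i` and the
`Sum.inr` basis vectors are the symbols `dz̄_i`. -/
abbrev CotSymb (ι : Type) : Type := (ι ⊕ ι) →₀ ℂ

/-- Constant-coefficient complex-valued differential forms: the exterior algebra on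
the span of the symbols `dz_i`, `dz̄_i`. -/
abbrev FormAlg (ι : Type) : Type := ExteriorAlgebra ℂ (CotSymb ι)

/-- The holomorphic coordinate differential `dz_i`. -/
def dz {ι : Type} (i : ι) : FormAlg ι :=
  ExteriorAlgebra.ι ℂ (Finsupp.single (Sum.inl i) 1)

/-- The antiholomorphic coordinate differential `dz̄_i`. -/
def dzbar {ι : Type} (i : ι) : FormAlg ι :=
  ExteriorAlgebra.ι ℂ (Finsupp.single (Sum.inr i) 1)

/-- Points of the manifold `ℋ × ℂ^n`. -/
abbrev Pt (n : ℕ) : Type := UpperHalfPlane × (Fin n → ℂ)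

/-- The index (in `Fin (k+ℓ−j)`, 0-based) of the coordinate `ζ_{i+1}` in
`(ζ₁,…,ζ_{k′+ℓ′}) = (z₁,…,z_{k′}, z_{k+1},…,z_m)`. -/
def zetaIdx (k ℓ j : ℕ) (hjk : j ≤ k) (hkl : k ≤ ℓ)
    (i : Fin ((k - j) + (ℓ - j))) : Fin (k + ℓ - j) :=
  if h : (i : ℕ) < k - j then ⟨i, by have := i.2; omega⟩
  else ⟨(i : ℕ) + j, by have := i.2; omega⟩

/-- The symmetrized form
`ψ_a = (1/(k′+ℓ′)!) Σ_{σ∈𝔖_{k′+ℓ′}} sgn(σ) dζ̄_{σ(1)} ∧ ⋯ ∧ dζ̄_{σ(a)} ∧ dζ_{σ(a+1)} ∧ ⋯ ∧ dζ_{σ(k′+ℓ′)}`. -/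
def psi (k ℓ j : ℕ) (hjk : j ≤ k) (hkl : k ≤ ℓ) (a : ℕ)
    (ha : a ≤ (k - j) + (ℓ - j)) : FormAlg (Option (Fin (k + ℓ - j))) :=
  ((((k - j) + (ℓ - j)).factorial : ℂ))⁻¹ •
    ∑ σ : Equiv.Perm (Fin ((k - j) + (ℓ - j))),
      ((Equiv.Perm.sign σ : ℤ) : ℂ) •
        ((List.ofFn fun i : Fin a =>
            dzbar (some (zetaIdx k ℓ j hjk hkl (σ ⟨i, by have := i.2; omega⟩)))).prod *
         (List.ofFn fun i : Fin ((k - j) + (ℓ - j) - a) =>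
            dz (some (zetaIdx k ℓ j hjk hkl (σ ⟨a + i, by have := i.2; omega⟩)))).prod)

/-- The form `Θ = Δ* i* Ω_{f,g} =
(−1)^{k+ℓ+1} (2πi)^{k+ℓ+2} F(τ) conj(G(τ)) dτ ∧ dτ̄ ∧ dz₁ ∧ ⋯ ∧ dz_k ∧ dz̄_{k′+1} ∧ ⋯ ∧ dz̄_m`
on `ℋ × ℂ^m`, `m = k+ℓ−j`. -/
def Theta (k ℓ j : ℕ) (hjk : j ≤ k) (hkl : k ≤ ℓ) (F G : ℂ → ℂ)
    (x : Pt (k + ℓ - j)) : FormAlg (Option (Fin (k + ℓ - j))) :=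
  ((-1 : ℂ) ^ (k + ℓ + 1) * (2 * (Real.pi : ℂ) * Complex.I) ^ (k + ℓ + 2) *
      F (x.1 : ℂ) * (starRingEnd ℂ) (G (x.1 : ℂ))) •
    (dz (none : Option (Fin (k + ℓ - j))) * dzbar (none : Option (Fin (k + ℓ - j))) *
      (List.ofFn fun i : Fin k =>
        dz (some (⟨i, by have := i.2; omega⟩ : Fin (k + ℓ - j)))).prod *
      (List.ofFn fun i : Fin ℓ =>
        dzbar (some (⟨(k - j) + i, by have := i.2; omega⟩ : Fin (k + ℓ - j)))).prod)

/-- The constant `C₁`. -/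
def C1 (k ℓ j : ℕ) : ℂ :=
  (-1 : ℂ) ^ (k + ℓ + 1 + (k - j) ^ 2 + j * ((k - j) + (ℓ - j)) +
      ((k - j) + j + (ℓ - j)) * ((k - j) + j + (ℓ - j) - 1) / 2) *
    (((k - j).factorial : ℂ) * ((ℓ - j).factorial : ℂ) /
      (((k - j) + (ℓ - j)).factorial : ℂ)) *
    (2 * (Real.pi : ℂ) * Complex.I) ^ (k + ℓ + 2)

end

section PsiAux

variable {ι : Type}

/-- The generator of `FormAlg ι` attached to a symbol. -/
noncomputable def gsym (s : ι ⊕ ι) : FormAlg ι := ExteriorAlgebra.ι ℂ (Finsupp.single s 1)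

lemma gsym_sq (s : ι ⊕ ι) : gsym s * gsym s = 0 :=
  ExteriorAlgebra.ι_sq_zero _

lemma gsym_anticomm (s t : ι ⊕ ι) : gsym s * gsym t = - (gsym t * gsym s) :=
  eq_neg_of_add_eq_zero_left (ExteriorAlgebra.ι_add_mul_swap _ _)

/-- Product of the generators attached to a list of symbols. -/
noncomputable def Pl (l : List (ι ⊕ ι)) : FormAlg ι := (l.map gsym).prod

lemma Pl_nil : Pl ([] : List (ι ⊕ ι)) = 1 := rfl

lemma Pl_cons (s : ι ⊕ ι) (l : List (ι ⊕ ι)) : Pl (s :: l) = gsym s * Pl l := by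
  simp [Pl]

lemma Pl_append (l₁ l₂ : List (ι ⊕ ι)) : Pl (l₁ ++ l₂) = Pl l₁ * Pl l₂ := by
  simp [Pl]

lemma Pl_singleton (s : ι ⊕ ι) : Pl [s] = gsym s := by simp [Pl]

lemma gsym_mul_Pl (s : ι ⊕ ι) (l : List (ι ⊕ ι)) :
    gsym s * Pl l = ((-1 : ℂ) ^ l.length) • (Pl l * gsym s) := by
  induction l with
  | nil => simp [Pl]
  | cons t l ih =>
    rw [Pl_cons, ← mul_assoc, gsym_anticomm s t, neg_mul, mul_assoc, ih,
      mul_smul_comm, List.length_cons, pow_succ, ← neg_smul, ← mul_assoc]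
    congr 1
    ring

lemma Pl_mul_Pl (l₁ l₂ : List (ι ⊕ ι)) :
    Pl l₁ * Pl l₂ = ((-1 : ℂ) ^ (l₁.length * l₂.length)) • (Pl l₂ * Pl l₁) := by
  induction l₁ with
  | nil => simp [Pl]
  | cons s l ih =>
    rw [Pl_cons, mul_assoc, ih, mul_smul_comm, ← mul_assoc, gsym_mul_Pl,
      smul_mul_assoc, smul_smul, mul_assoc, ← pow_add]
    congr 2
    simp [List.length_cons]
    ring

lemma gsym_mul_Pl_eq_zero {s : ι ⊕ ι} {l : List (ι ⊕ ι)} (h : s ∈ l) :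
    gsym s * Pl l = 0 := by
  induction l with
  | nil => cases h
  | cons t l ih =>
    rw [Pl_cons, ← mul_assoc]
    rcases List.mem_cons.mp h with rfl | h'
    · rw [gsym_sq, zero_mul]
    · rw [gsym_anticomm, neg_mul, mul_assoc, ih h', mul_zero, neg_zero]

lemma Pl_mul_Pl_eq_zero {s : ι ⊕ ι} {l₁ l₂ : List (ι ⊕ ι)} (h₁ : s ∈ l₁) (h₂ : s ∈ l₂) :
    Pl l₁ * Pl l₂ = 0 := by
  induction l₁ with
  | nil => cases h₁
  | cons t l ih =>
    rcases List.mem_cons.mp h₁ with rfl | h'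
    · rw [Pl_cons, mul_assoc, Pl_mul_Pl l l₂, mul_smul_comm, ← mul_assoc,
        gsym_mul_Pl_eq_zero h₂, zero_mul, smul_zero]
    · rw [Pl_cons, mul_assoc, ih h', mul_zero]

lemma Pl3_zero_13 {s : ι ⊕ ι} {l₁ l₂ l₃ : List (ι ⊕ ι)} (h₁ : s ∈ l₁) (h₃ : s ∈ l₃) :
    Pl l₁ * Pl l₂ * Pl l₃ = 0 := by
  rw [Pl_mul_Pl l₁ l₂, smul_mul_assoc, mul_assoc, Pl_mul_Pl_eq_zero h₁ h₃, mul_zero, smul_zero]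

lemma Pl3_zero_23 {s : ι ⊕ ι} {l₁ l₂ l₃ : List (ι ⊕ ι)} (h₂ : s ∈ l₂) (h₃ : s ∈ l₃) :
    Pl l₁ * Pl l₂ * Pl l₃ = 0 := by
  rw [mul_assoc, Pl_mul_Pl_eq_zero h₂ h₃, mul_zero]

lemma tri_succ (n : ℕ) : (n + 1) * n / 2 = n + n * (n - 1) / 2 := by
  cases n with
  | zero => rfl
  | succ p =>
    have h : (p + 2) * (p + 1) = (p + 1) * p + 2 * (p + 1) := by ring
    rw [h, Nat.add_mul_div_left _ _ (by norm_num : 0 < 2)]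
    simp only [Nat.add_sub_cancel]
    omega

lemma Pl_interleave : ∀ (n : ℕ) (u v : Fin n → ι ⊕ ι),
    Pl (List.ofFn u) * Pl (List.ofFn v)
      = ((-1 : ℂ) ^ (n * (n - 1) / 2)) • (List.ofFn fun i => gsym (u i) * gsym (v i)).prod := by
  intro n
  induction n with
  | zero => simp [Pl]
  | succ n ih =>
    intro u v
    rw [List.ofFn_succ (f := u), List.ofFn_succ (f := v),
      List.ofFn_succ (f := fun i => gsym (u i) * gsym (v i)), List.prod_cons,
      Pl_cons, Pl_cons]
    have h1 : Pl (List.ofFn fun i => u i.succ) * gsym (v 0)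
        = ((-1 : ℂ) ^ n) • (gsym (v 0) * Pl (List.ofFn fun i => u i.succ)) := by
      have h2 := Pl_mul_Pl (List.ofFn fun i : Fin n => u i.succ) [v 0]
      simpa [Pl_singleton] using h2
    rw [mul_assoc (gsym (u 0)), ← mul_assoc (Pl (List.ofFn fun i => u i.succ)), h1,
      smul_mul_assoc, mul_smul_comm, mul_assoc (gsym (v 0)), ih, mul_smul_comm,
      mul_smul_comm, smul_smul, ← pow_add,
      show (n + 1) * (n + 1 - 1) / 2 = n + n * (n - 1) / 2 by simpa using tri_succ n, ← mul_assoc]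
end PsiAux

section Aux2

lemma zetaIdx_val (k ℓ j : ℕ) (hjk : j ≤ k) (hkl : k ≤ ℓ) (i : Fin ((k - j) + (ℓ - j))) :
    (zetaIdx k ℓ j hjk hkl i : ℕ) = if (i : ℕ) < k - j then (i : ℕ) else (i : ℕ) + j := by
  unfold zetaIdx
  split <;> simp_all

lemma pigeonA {n b a : ℕ} (σ : Equiv.Perm (Fin n)) (ha : a ≤ n)
    (h : ∀ (i : ℕ) (hi : i < a), (σ ⟨i, by omega⟩ : ℕ) < b) : a ≤ b := by
  have hinj : Function.Injective
      (fun i : Fin a => (⟨(σ ⟨(i : ℕ), by omega⟩ : ℕ), h i i.2⟩ : Fin b)) := by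
    intro p q hpq
    simp only [Fin.mk.injEq] at hpq
    have h2 : (σ ⟨(p : ℕ), by omega⟩) = (σ ⟨(q : ℕ), by omega⟩) := Fin.ext hpq
    have h3 := σ.injective h2
    simp only [Fin.mk.injEq] at h3
    exact Fin.ext h3
  simpa using Fintype.card_le_of_injective _ hinj

lemma pigeonB {n a b c : ℕ} (σ : Equiv.Perm (Fin n)) (hc : a + c ≤ n)
    (h : ∀ (i : ℕ) (hi : i < c), b ≤ (σ ⟨a + i, by omega⟩ : ℕ)) : c ≤ n - b := by
  have hinj : Function.Injective
      (fun i : Fin c => (⟨(σ ⟨a + (i : ℕ), by omega⟩ : ℕ) - b,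
        by have := (σ ⟨a + (i : ℕ), by omega⟩).isLt; have := h i i.2; omega⟩ : Fin (n - b))) := by
    intro p q hpq
    simp only [Fin.mk.injEq] at hpq
    have hp := h p p.2
    have hq := h q q.2
    have h2 : (σ ⟨a + (p : ℕ), by omega⟩ : ℕ) = (σ ⟨a + (q : ℕ), by omega⟩ : ℕ) := by omega
    have h3 := σ.injective (Fin.ext h2)
    simp only [Fin.mk.injEq] at h3
    exact Fin.ext (by omega)
  simpa using Fintype.card_le_of_injective _ hinj

lemma block_ge {n b : ℕ} (σ : Equiv.Perm (Fin n))
    (hb : ∀ q : Fin n, (q : ℕ) < b → (σ q : ℕ) < b) :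
    ∀ q : Fin n, b ≤ (q : ℕ) → b ≤ (σ q : ℕ) := by
  intro q hq
  by_contra hlt
  push_neg at hlt
  have hbn : b < n := lt_of_le_of_lt hq q.isLt
  set f : Fin b → Fin b := fun i =>
    ⟨(σ ⟨(i : ℕ), by omega⟩ : ℕ), hb _ i.2⟩ with hf
  have hinj : Function.Injective f := by
    intro p r hpr
    simp only [hf, Fin.mk.injEq] at hpr
    have h3 := σ.injective (Fin.ext hpr)
    simp only [Fin.mk.injEq] at h3
    exact Fin.ext h3
  obtain ⟨i, hi⟩ := (Finite.injective_iff_surjective.mp hinj) ⟨(σ q : ℕ), hlt⟩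
  simp only [hf, Fin.mk.injEq] at hi
  have h4 := σ.injective (Fin.ext hi)
  have h5 : (i : ℕ) = (q : ℕ) := by
    simpa using congrArg Fin.val h4
  have := i.isLt
  omega

/-- The block embedding of a pair of permutations. -/
def embPerm {K L : ℕ} (p : Equiv.Perm (Fin K) × Equiv.Perm (Fin L)) :
    Equiv.Perm (Fin (K + L)) :=
  (finSumFinEquiv.symm.trans ((p.1.sumCongr p.2).trans finSumFinEquiv))

lemma embPerm_castAdd {K L : ℕ} (p : Equiv.Perm (Fin K) × Equiv.Perm (Fin L)) (i : Fin K) :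
    embPerm p (Fin.castAdd L i) = Fin.castAdd L (p.1 i) := by
  simp [embPerm]

lemma embPerm_natAdd {K L : ℕ} (p : Equiv.Perm (Fin K) × Equiv.Perm (Fin L)) (i : Fin L) :
    embPerm p (Fin.natAdd K i) = Fin.natAdd K (p.2 i) := by
  simp [embPerm]

lemma embPerm_val {K L : ℕ} (p : Equiv.Perm (Fin K) × Equiv.Perm (Fin L)) (q : Fin (K + L)) :
    (embPerm p q : ℕ) = if h : (q : ℕ) < K then (p.1 ⟨(q : ℕ), h⟩ : ℕ)
      else K + (p.2 ⟨(q : ℕ) - K, by have := q.isLt; omega⟩ : ℕ) := by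
  induction q using Fin.addCases with
  | left i =>
    rw [embPerm_castAdd, dif_pos (show ((Fin.castAdd L i : Fin (K + L)) : ℕ) < K by
      simpa using i.isLt)]
    simp
  | right i =>
    rw [embPerm_natAdd, dif_neg (show ¬ ((Fin.natAdd K i : Fin (K + L)) : ℕ) < K by
      simp)]
    simp only [Fin.coe_natAdd]
    congr 1
    have h3 : (⟨K + (i : ℕ) - K, by have := i.isLt; omega⟩ : Fin L) = i := by
      ext; simp
    rw [h3]

lemma card_block (K L : ℕ) :
    (Finset.univ.filter
        (fun σ : Equiv.Perm (Fin (K + L)) => ∀ q : Fin (K + L), (q : ℕ) < K → (σ q : ℕ) < K)).card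
      = K.factorial * L.factorial := by
  have hcard := Finset.card_bij
    (t := Finset.univ.filter
        (fun σ : Equiv.Perm (Fin (K + L)) => ∀ q : Fin (K + L), (q : ℕ) < K → (σ q : ℕ) < K))
    (fun (p : Equiv.Perm (Fin K) × Equiv.Perm (Fin L)) (_ : p ∈ Finset.univ) => embPerm p)
    ?hi ?inj ?surj
  · rw [← hcard]
    simp [Fintype.card_perm]
  case hi =>
    intro p _
    simp only [Finset.mem_filter, Finset.mem_univ, true_and]
    intro q hq
    rw [embPerm_val, dif_pos hq]
    exact (p.1 ⟨(q : ℕ), hq⟩).isLt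
  case inj =>
    intro p₁ _ p₂ _ hp
    have hp' : embPerm p₁ = embPerm p₂ := hp
    have hval : ∀ q : Fin (K + L), (embPerm p₁ q) = (embPerm p₂ q) := by
      intro q; rw [hp']
    ext i
    · have h1 := hval (Fin.castAdd L i)
      rw [embPerm_castAdd, embPerm_castAdd] at h1
      have h2 := congrArg Fin.val h1
      simpa using h2
    · have h1 := hval (Fin.natAdd K i)
      rw [embPerm_natAdd, embPerm_natAdd] at h1
      have h2 := congrArg Fin.val h1
      simpa using h2
  case surj =>
    intro σ hσ
    simp only [Finset.mem_filter, Finset.mem_univ, true_and] at hσ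
    have hge := block_ge σ hσ
    set f1 : Fin K → Fin K := fun i =>
      ⟨(σ (Fin.castAdd L i) : ℕ), hσ _ (by simpa using i.isLt)⟩ with hf1
    have hinj1 : Function.Injective f1 := by
      intro p r hpr
      simp only [hf1, Fin.mk.injEq] at hpr
      have h3 := σ.injective (Fin.ext hpr)
      have h4 := congrArg Fin.val h3
      simp only [Fin.coe_castAdd] at h4
      exact Fin.ext h4
    set f2 : Fin L → Fin L := fun i =>
      ⟨(σ (Fin.natAdd K i) : ℕ) - K,
        by have h1 := (σ (Fin.natAdd K i)).isLt; have h2 := i.isLt; omega⟩ with hf2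
    have hinj2 : Function.Injective f2 := by
      intro p r hpr
      simp only [hf2, Fin.mk.injEq] at hpr
      have hp := hge (Fin.natAdd K p) (by simp)
      have hr := hge (Fin.natAdd K r) (by simp)
      have h2 : (σ (Fin.natAdd K p) : ℕ) = (σ (Fin.natAdd K r) : ℕ) := by omega
      have h3 := σ.injective (Fin.ext h2)
      have h4 := congrArg Fin.val h3
      simp only [Fin.coe_natAdd] at h4
      exact Fin.ext (by omega)
    refine ⟨(Equiv.ofBijective f1 (Finite.injective_iff_bijective.mp hinj1),
             Equiv.ofBijective f2 (Finite.injective_iff_bijective.mp hinj2)), Finset.mem_univ _, ?_⟩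
    ext q
    have hq := q.isLt
    show ((embPerm (Equiv.ofBijective f1 (Finite.injective_iff_bijective.mp hinj1),
             Equiv.ofBijective f2 (Finite.injective_iff_bijective.mp hinj2)) q : Fin (K + L)) : ℕ)
      = ((σ q : Fin (K + L)) : ℕ)
    rw [embPerm_val]
    split
    case isTrue h =>
      show (f1 ⟨(q : ℕ), h⟩ : ℕ) = (σ q : ℕ)
      show (σ (Fin.castAdd L ⟨(q : ℕ), h⟩) : ℕ) = (σ q : ℕ)
      rfl
    case isFalse h =>
      show K + (f2 ⟨(q : ℕ) - K, by omega⟩ : ℕ) = (σ q : ℕ)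
      show K + ((σ (Fin.natAdd K ⟨(q : ℕ) - K, by omega⟩) : ℕ) - K) = (σ q : ℕ)
      rw [show Fin.natAdd K (⟨(q : ℕ) - K, by omega⟩ : Fin L) = q from by ext; simp; omega]
      have := hge q (by omega)
      omega

end Aux2

section Aux3

lemma ofFn_dz_prod {ιt : Type} {n : ℕ} (f : Fin n → ιt) :
    (List.ofFn fun i => dz (f i)).prod
      = Pl (List.ofFn fun i => (Sum.inl (f i) : ιt ⊕ ιt)) := by
  rw [Pl, List.map_ofFn]
  rfl

lemma ofFn_dzbar_prod {ιt : Type} {n : ℕ} (f : Fin n → ιt) :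
    (List.ofFn fun i => dzbar (f i)).prod
      = Pl (List.ofFn fun i => (Sum.inr (f i) : ιt ⊕ ιt)) := by
  rw [Pl, List.map_ofFn]
  rfl

/-- The symbol list of the generator part of `Θ`. -/
def thetaList (k ℓ j : ℕ) (hjk : j ≤ k) (hkl : k ≤ ℓ) : List ((Option (Fin (k + ℓ - j))) ⊕ (Option (Fin (k + ℓ - j)))) :=
  (Sum.inl none) :: (Sum.inr none) ::
    ((List.ofFn fun p : Fin k =>
        (Sum.inl (some (⟨(p : ℕ), by have := p.2; omega⟩ : Fin (k + ℓ - j))))) ++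
     (List.ofFn fun p : Fin ℓ =>
        (Sum.inr (some (⟨(k - j) + (p : ℕ), by have := p.2; omega⟩ : Fin (k + ℓ - j))))))

lemma theta_Pl (k ℓ j : ℕ) (hjk : j ≤ k) (hkl : k ≤ ℓ) :
    dz (none : Option (Fin (k + ℓ - j))) * dzbar (none : Option (Fin (k + ℓ - j))) *
      (List.ofFn fun i : Fin k =>
        dz (some (⟨(i : ℕ), by have := i.2; omega⟩ : Fin (k + ℓ - j)))).prod *
      (List.ofFn fun i : Fin ℓ =>
        dzbar (some (⟨(k - j) + (i : ℕ), by have := i.2; omega⟩ : Fin (k + ℓ - j)))).prod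
      = Pl (thetaList k ℓ j hjk hkl) := by
  rw [thetaList, Pl_cons, Pl_cons, Pl_append, ofFn_dz_prod, ofFn_dzbar_prod]
  show dz none * dzbar none * Pl _ * Pl _ = _
  simp only [mul_assoc]
  rfl

lemma kill_bar (k ℓ j : ℕ) (hjk : j ≤ k) (hkl : k ≤ ℓ) (a : ℕ) (ha : a ≤ (k - j) + (ℓ - j))
    (σ : Equiv.Perm (Fin ((k - j) + (ℓ - j)))) (i : ℕ) (hi : i < a)
    (hge : k - j ≤ (σ ⟨i, by omega⟩ : ℕ)) :
    ((List.ofFn fun p : Fin a =>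
        dzbar (some (zetaIdx k ℓ j hjk hkl (σ ⟨(p : ℕ), by have := p.2; omega⟩)))).prod *
     (List.ofFn fun p : Fin ((k - j) + (ℓ - j) - a) =>
        dz (some (zetaIdx k ℓ j hjk hkl (σ ⟨a + (p : ℕ), by have := p.2; omega⟩)))).prod) *
    (dz (none : Option (Fin (k + ℓ - j))) * dzbar (none : Option (Fin (k + ℓ - j))) *
      (List.ofFn fun p : Fin k =>
        dz (some (⟨(p : ℕ), by have := p.2; omega⟩ : Fin (k + ℓ - j)))).prod *
      (List.ofFn fun p : Fin ℓ =>
        dzbar (some (⟨(k - j) + (p : ℕ), by have := p.2; omega⟩ : Fin (k + ℓ - j)))).prod)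
      = 0 := by
  have hilt : i < (k - j) + (ℓ - j) := by omega
  have hgei : k - j ≤ (σ ⟨i, hilt⟩ : ℕ) := hge
  rw [ofFn_dzbar_prod, ofFn_dz_prod, theta_Pl k ℓ j hjk hkl]
  refine Pl3_zero_13
    (s := Sum.inr (some (zetaIdx k ℓ j hjk hkl (σ (⟨i, hilt⟩ : Fin ((k - j) + (ℓ - j))))))) ?_ ?_
  · rw [List.mem_ofFn]
    exact ⟨⟨i, hi⟩, rfl⟩
  · have hlt2 := (σ (⟨i, hilt⟩ : Fin ((k - j) + (ℓ - j)))).isLt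
    have hzv : (zetaIdx k ℓ j hjk hkl (σ (⟨i, hilt⟩ : Fin ((k - j) + (ℓ - j)))) : ℕ)
        = (σ (⟨i, hilt⟩ : Fin ((k - j) + (ℓ - j))) : ℕ) + j := by
      rw [zetaIdx_val, if_neg (by omega)]
    rw [thetaList]
    refine List.mem_cons.mpr (Or.inr (List.mem_cons.mpr (Or.inr (List.mem_append.mpr
      (Or.inr ?_)))))
    rw [List.mem_ofFn]
    refine ⟨⟨(σ (⟨i, hilt⟩ : Fin ((k - j) + (ℓ - j))) : ℕ) + j - (k - j), by omega⟩, ?_⟩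
    simp only [Sum.inr.injEq, Option.some.injEq]
    refine Fin.ext ?_
    show (k - j) + ((σ (⟨i, hilt⟩ : Fin ((k - j) + (ℓ - j))) : ℕ) + j - (k - j))
      = (zetaIdx k ℓ j hjk hkl (σ (⟨i, hilt⟩ : Fin ((k - j) + (ℓ - j)))) : ℕ)
    omega

set_option maxHeartbeats 1000000 in
lemma kill_dz (k ℓ j : ℕ) (hjk : j ≤ k) (hkl : k ≤ ℓ) (a : ℕ) (ha : a ≤ (k - j) + (ℓ - j))
    (σ : Equiv.Perm (Fin ((k - j) + (ℓ - j)))) (i : ℕ) (hi : i < (k - j) + (ℓ - j) - a)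
    (hlt : (σ ⟨a + i, by omega⟩ : ℕ) < k - j) :
    ((List.ofFn fun p : Fin a =>
        dzbar (some (zetaIdx k ℓ j hjk hkl (σ ⟨(p : ℕ), by have := p.2; omega⟩)))).prod *
     (List.ofFn fun p : Fin ((k - j) + (ℓ - j) - a) =>
        dz (some (zetaIdx k ℓ j hjk hkl (σ ⟨a + (p : ℕ), by have := p.2; omega⟩)))).prod) *
    (dz (none : Option (Fin (k + ℓ - j))) * dzbar (none : Option (Fin (k + ℓ - j))) *
      (List.ofFn fun p : Fin k =>
        dz (some (⟨(p : ℕ), by have := p.2; omega⟩ : Fin (k + ℓ - j)))).prod *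
      (List.ofFn fun p : Fin ℓ =>
        dzbar (some (⟨(k - j) + (p : ℕ), by have := p.2; omega⟩ : Fin (k + ℓ - j)))).prod)
      = 0 := by
  have hilt : a + i < (k - j) + (ℓ - j) := by omega
  have hlti : (σ ⟨a + i, hilt⟩ : ℕ) < k - j := hlt
  rw [ofFn_dzbar_prod, ofFn_dz_prod, theta_Pl k ℓ j hjk hkl]
  refine Pl3_zero_23
    (s := Sum.inl (some (zetaIdx k ℓ j hjk hkl (σ (⟨a + i, hilt⟩ : Fin ((k - j) + (ℓ - j))))))) ?_ ?_
  · rw [List.mem_ofFn]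
    exact ⟨⟨i, hi⟩, rfl⟩
  · have hzv : (zetaIdx k ℓ j hjk hkl (σ (⟨a + i, hilt⟩ : Fin ((k - j) + (ℓ - j)))) : ℕ)
        = (σ (⟨a + i, hilt⟩ : Fin ((k - j) + (ℓ - j))) : ℕ) := by
      rw [zetaIdx_val, if_pos hlti]
    rw [thetaList]
    refine List.mem_cons.mpr (Or.inr (List.mem_cons.mpr (Or.inr (List.mem_append.mpr
      (Or.inl ?_)))))
    rw [List.mem_ofFn]
    refine ⟨⟨(σ (⟨a + i, hilt⟩ : Fin ((k - j) + (ℓ - j))) : ℕ), by omega⟩, ?_⟩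
    simp only [Sum.inl.injEq, Option.some.injEq]
    refine Fin.ext ?_
    show (σ (⟨a + i, hilt⟩ : Fin ((k - j) + (ℓ - j))) : ℕ)
      = (zetaIdx k ℓ j hjk hkl (σ (⟨a + i, hilt⟩ : Fin ((k - j) + (ℓ - j)))) : ℕ)
    omega

end Aux3

section Aux4

/-- Base symbol vector for `ψ_{k'}`. -/
noncomputable def Vbase (k ℓ j : ℕ) (hjk : j ≤ k) (hkl : k ≤ ℓ)
    (p : Fin ((k - j) + (ℓ - j))) : CotSymb (Option (Fin (k + ℓ - j))) :=
  if (p : ℕ) < k - j then Finsupp.single (Sum.inr (some (zetaIdx k ℓ j hjk hkl p))) 1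
  else Finsupp.single (Sum.inl (some (zetaIdx k ℓ j hjk hkl p))) 1

lemma zeta_castAdd (k ℓ j : ℕ) (hjk : j ≤ k) (hkl : k ≤ ℓ) (p : Fin (k - j)) :
    zetaIdx k ℓ j hjk hkl (Fin.castAdd (ℓ - j) p)
      = ⟨(p : ℕ), by have := p.2; omega⟩ := by
  refine Fin.ext ?_
  rw [zetaIdx_val, if_pos (by simpa using p.2)]
  rfl

lemma zeta_natAdd (k ℓ j : ℕ) (hjk : j ≤ k) (hkl : k ≤ ℓ) (p : Fin (ℓ - j)) :
    zetaIdx k ℓ j hjk hkl (Fin.natAdd (k - j) p)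
      = ⟨k + (p : ℕ), by have := p.2; omega⟩ := by
  refine Fin.ext ?_
  rw [zetaIdx_val, if_neg (by simp)]
  show ((Fin.natAdd (k - j) p : Fin ((k - j) + (ℓ - j))) : ℕ) + j = k + (p : ℕ)
  simp only [Fin.coe_natAdd]
  omega

set_option maxHeartbeats 1000000 in
lemma psiprod_block (k ℓ j : ℕ) (hjk : j ≤ k) (hkl : k ≤ ℓ)
    (σ : Equiv.Perm (Fin ((k - j) + (ℓ - j))))
    (hb : ∀ q : Fin ((k - j) + (ℓ - j)), (q : ℕ) < k - j → (σ q : ℕ) < k - j) :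
    ((List.ofFn fun p : Fin (k - j) =>
        dzbar (some (zetaIdx k ℓ j hjk hkl (σ ⟨(p : ℕ), by have := p.2; omega⟩)))).prod *
     (List.ofFn fun p : Fin ((k - j) + (ℓ - j) - (k - j)) =>
        dz (some (zetaIdx k ℓ j hjk hkl
          (σ ⟨(k - j) + (p : ℕ), by have := p.2; omega⟩)))).prod)
    = ((Equiv.Perm.sign σ : ℤ) : ℂ) •
      ((List.ofFn fun p : Fin (k - j) =>
          dzbar (some (⟨(p : ℕ), by have := p.2; omega⟩ : Fin (k + ℓ - j)))).prod *
       (List.ofFn fun p : Fin (ℓ - j) =>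
          dz (some (⟨k + (p : ℕ), by have := p.2; omega⟩ : Fin (k + ℓ - j)))).prod) := by
  have hge := block_ge σ hb
  have hcast : (List.ofFn fun p : Fin ((k - j) + (ℓ - j) - (k - j)) =>
        dz (some (zetaIdx k ℓ j hjk hkl
          (σ ⟨(k - j) + (p : ℕ), by have := p.2; omega⟩)))).prod
      = (List.ofFn fun p : Fin (ℓ - j) =>
        dz (some (zetaIdx k ℓ j hjk hkl
          (σ ⟨(k - j) + (p : ℕ), by have := p.2; omega⟩)))).prod := by
    refine congrArg List.prod (List.ext_getElem (by simp only [List.length_ofFn]; omega)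
      fun i h1 h2 => by simp only [List.getElem_ofFn])
  rw [hcast]
  have h1 : ((List.ofFn fun p : Fin (k - j) =>
        dzbar (some (zetaIdx k ℓ j hjk hkl (σ ⟨(p : ℕ), by have := p.2; omega⟩)))).prod *
     (List.ofFn fun p : Fin (ℓ - j) =>
        dz (some (zetaIdx k ℓ j hjk hkl
          (σ ⟨(k - j) + (p : ℕ), by have := p.2; omega⟩)))).prod)
      = ExteriorAlgebra.ιMulti ℂ ((k - j) + (ℓ - j))
          (fun p => Vbase k ℓ j hjk hkl (σ p)) := by
    rw [ExteriorAlgebra.ιMulti_apply, List.ofFn_add, List.prod_append]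
    congr 1
    · refine congrArg List.prod (congrArg List.ofFn (funext fun p => ?_))
      have hblt : (σ (Fin.castAdd (ℓ - j) p) : ℕ) < k - j := hb _ (by simpa using p.2)
      show _ = ExteriorAlgebra.ι ℂ (Vbase k ℓ j hjk hkl (σ (Fin.castAdd (ℓ - j) p)))
      rw [Vbase, if_pos hblt]
      rfl
    · refine congrArg List.prod (congrArg List.ofFn (funext fun p => ?_))
      have hbge : k - j ≤ (σ (Fin.natAdd (k - j) p) : ℕ) := hge _ (by simp)
      show _ = ExteriorAlgebra.ι ℂ (Vbase k ℓ j hjk hkl (σ (Fin.natAdd (k - j) p)))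
      rw [Vbase, if_neg (by omega)]
      rfl
  have h2 := AlternatingMap.map_perm
    (ExteriorAlgebra.ιMulti ℂ ((k - j) + (ℓ - j))
      (M := CotSymb (Option (Fin (k + ℓ - j))))) (Vbase k ℓ j hjk hkl) σ
  have h3 : ExteriorAlgebra.ιMulti ℂ ((k - j) + (ℓ - j)) (Vbase k ℓ j hjk hkl)
      = ((List.ofFn fun p : Fin (k - j) =>
          dzbar (some (⟨(p : ℕ), by have := p.2; omega⟩ : Fin (k + ℓ - j)))).prod *
       (List.ofFn fun p : Fin (ℓ - j) =>
          dz (some (⟨k + (p : ℕ), by have := p.2; omega⟩ : Fin (k + ℓ - j)))).prod) := by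
    rw [ExteriorAlgebra.ιMulti_apply, List.ofFn_add, List.prod_append]
    congr 1
    · refine congrArg List.prod (congrArg List.ofFn (funext fun p => ?_))
      show ExteriorAlgebra.ι ℂ (Vbase k ℓ j hjk hkl (Fin.castAdd (ℓ - j) p)) = _
      rw [Vbase, if_pos (show ((Fin.castAdd (ℓ - j) p : Fin ((k - j) + (ℓ - j))) : ℕ) < k - j by
        simpa using p.2), zeta_castAdd]
      rfl
    · refine congrArg List.prod (congrArg List.ofFn (funext fun p => ?_))
      show ExteriorAlgebra.ι ℂ (Vbase k ℓ j hjk hkl (Fin.natAdd (k - j) p)) = _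
      rw [Vbase, if_neg (show ¬ ((Fin.natAdd (k - j) p : Fin ((k - j) + (ℓ - j))) : ℕ) < k - j by
        simp), zeta_natAdd]
      rfl
  have h4 : ExteriorAlgebra.ιMulti ℂ ((k - j) + (ℓ - j)) (fun p => Vbase k ℓ j hjk hkl (σ p))
      = ExteriorAlgebra.ιMulti ℂ ((k - j) + (ℓ - j)) ((Vbase k ℓ j hjk hkl) ∘ σ) := rfl
  rw [h1, h4, h2, ← h3, Units.smul_def, Int.cast_smul_eq_zsmul]
end Aux4

section Aux5

lemma Pl_swap_left {ι : Type} (X Y : List (ι ⊕ ι)) (R : FormAlg ι) :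
    Pl X * (Pl Y * R) = ((-1 : ℂ) ^ (X.length * Y.length)) • (Pl Y * (Pl X * R)) := by
  rw [← mul_assoc, Pl_mul_Pl X Y, smul_mul_assoc, mul_assoc]

lemma inner_reorder {ι : Type} (A B C D : List (ι ⊕ ι)) :
    (Pl A * Pl B) * (Pl C * Pl D)
      = ((-1 : ℂ) ^ (A.length * (B.length + C.length) + B.length * C.length)) •
        ((Pl (C ++ B)) * (Pl (A ++ D))) := by
  rw [mul_assoc, Pl_swap_left B C (Pl D), mul_smul_comm,
    Pl_swap_left A C (Pl B * Pl D), Pl_swap_left A B (Pl D), mul_smul_comm,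
    smul_smul, smul_smul, Pl_append C B, Pl_append A D]
  congr 1
  · rw [← pow_add, ← pow_add]
    congr 1
    ring
  · rw [← mul_assoc]

lemma quad_reorder {ι : Type} (s t : ι ⊕ ι) (A B C D : List (ι ⊕ ι)) :
    (Pl A * Pl B) * Pl (s :: t :: (C ++ D))
      = ((-1 : ℂ) ^ (A.length * (B.length + C.length) + B.length * C.length)) •
        (gsym s * gsym t * (Pl (C ++ B) * Pl (A ++ D))) := by
  rw [Pl_cons, Pl_cons, Pl_append, ← Pl_append A B,
    show gsym s * (gsym t * (Pl C * Pl D)) = Pl [s, t] * (Pl C * Pl D) from by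
      rw [Pl_cons, Pl_singleton, mul_assoc],
    ← mul_assoc, Pl_mul_Pl (A ++ B) [s, t], smul_mul_assoc,
    show (A ++ B).length * ([s, t] : List (ι ⊕ ι)).length = 2 * (A.length + B.length) from by
      simp [List.length_append]; ring,
    pow_mul, neg_one_sq, one_pow, one_smul, Pl_cons, Pl_singleton, Pl_append A B,
    mul_assoc (gsym s * gsym t), inner_reorder A B C D, mul_smul_comm]

lemma glue_dz (k ℓ j : ℕ) (hjk : j ≤ k) (hkl : k ≤ ℓ) :
    ((List.ofFn fun p : Fin k =>
        (Sum.inl (some (⟨(p : ℕ), by have := p.2; omega⟩ : Fin (k + ℓ - j)))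
          : Option (Fin (k + ℓ - j)) ⊕ Option (Fin (k + ℓ - j)))) ++
     (List.ofFn fun p : Fin (ℓ - j) =>
        (Sum.inl (some (⟨k + (p : ℕ), by have := p.2; omega⟩ : Fin (k + ℓ - j)))
          : Option (Fin (k + ℓ - j)) ⊕ Option (Fin (k + ℓ - j)))))
      = List.ofFn fun q : Fin (k + ℓ - j) => Sum.inl (some q) := by
  apply List.ext_getElem
  case hl => simp only [List.length_append, List.length_ofFn]; omega
  case h =>
    intro i h1 h2
    by_cases hik : i < k
    · rw [List.getElem_append_left (by simpa using hik)]
      simp only [List.getElem_ofFn]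
    · rw [List.getElem_append_right (by simpa using hik)]
      simp only [List.getElem_ofFn, List.length_ofFn]
      simp only [Sum.inl.injEq, Option.some.injEq]
      refine Fin.ext ?_
      show k + (i - k) = i
      simp only [List.length_append, List.length_ofFn] at h1
      omega

lemma glue_dzbar (k ℓ j : ℕ) (hjk : j ≤ k) (hkl : k ≤ ℓ) :
    ((List.ofFn fun p : Fin (k - j) =>
        (Sum.inr (some (⟨(p : ℕ), by have := p.2; omega⟩ : Fin (k + ℓ - j)))
          : Option (Fin (k + ℓ - j)) ⊕ Option (Fin (k + ℓ - j)))) ++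
     (List.ofFn fun p : Fin ℓ =>
        (Sum.inr (some (⟨(k - j) + (p : ℕ), by have := p.2; omega⟩ : Fin (k + ℓ - j)))
          : Option (Fin (k + ℓ - j)) ⊕ Option (Fin (k + ℓ - j)))))
      = List.ofFn fun q : Fin (k + ℓ - j) => Sum.inr (some q) := by
  apply List.ext_getElem
  case hl => simp only [List.length_append, List.length_ofFn]; omega
  case h =>
    intro i h1 h2
    by_cases hik : i < k - j
    · rw [List.getElem_append_left (by simpa using hik)]
      simp only [List.getElem_ofFn]
    · rw [List.getElem_append_right (by simpa using hik)]
      simp only [List.getElem_ofFn, List.length_ofFn]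
      simp only [Sum.inr.injEq, Option.some.injEq]
      refine Fin.ext ?_
      show (k - j) + (i - (k - j)) = i
      simp only [List.length_append, List.length_ofFn] at h1
      omega

set_option maxHeartbeats 1000000 in
lemma base_reorder (k ℓ j : ℕ) (hjk : j ≤ k) (hkl : k ≤ ℓ) :
    ((List.ofFn fun p : Fin (k - j) =>
        dzbar (some (⟨(p : ℕ), by have := p.2; omega⟩ : Fin (k + ℓ - j)))).prod *
     (List.ofFn fun p : Fin (ℓ - j) =>
        dz (some (⟨k + (p : ℕ), by have := p.2; omega⟩ : Fin (k + ℓ - j)))).prod) *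
    (dz (none : Option (Fin (k + ℓ - j))) * dzbar (none : Option (Fin (k + ℓ - j))) *
      (List.ofFn fun p : Fin k =>
        dz (some (⟨(p : ℕ), by have := p.2; omega⟩ : Fin (k + ℓ - j)))).prod *
      (List.ofFn fun p : Fin ℓ =>
        dzbar (some (⟨(k - j) + (p : ℕ), by have := p.2; omega⟩ : Fin (k + ℓ - j)))).prod)
    = ((-1 : ℂ) ^ ((k - j) * ((ℓ - j) + k) + (ℓ - j) * k
          + (k + ℓ - j) * ((k + ℓ - j) - 1) / 2)) •
      (dz (none : Option (Fin (k + ℓ - j))) * dzbar (none : Option (Fin (k + ℓ - j))) *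
        (List.ofFn fun q : Fin (k + ℓ - j) => dz (some q) * dzbar (some q)).prod) := by
  rw [theta_Pl k ℓ j hjk hkl, ofFn_dzbar_prod, ofFn_dz_prod, thetaList, quad_reorder]
  rw [glue_dz k ℓ j hjk hkl, glue_dzbar k ℓ j hjk hkl]
  rw [Pl_interleave (k + ℓ - j) (fun q => Sum.inl (some q)) (fun q => Sum.inr (some q)),
    mul_smul_comm, smul_smul, ← pow_add]
  simp only [List.length_ofFn]
  rfl

end Aux5

set_option maxHeartbeats 2000000 in
/-- `ψ_a ∧ Θ = 0` for `a ≠ k′`, and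
`ψ_{k′} ∧ Θ = C₁ · F(τ) conj(G(τ)) dτ ∧ dτ̄ ∧ (dz₁ ∧ dz̄₁) ∧ ⋯ ∧ (dz_m ∧ dz̄_m)`. -/
theorem psi_wedge_Theta
    (k ℓ j : ℕ) (hjk : j ≤ k) (hkl : k ≤ ℓ)
    (F G : ℂ → ℂ)
    (hF : ContDiffOn ℝ (⊤ : ℕ∞) F {z : ℂ | 0 < z.im})
    (hG : ContDiffOn ℝ (⊤ : ℕ∞) G {z : ℂ | 0 < z.im}) :
    (∀ (a : ℕ) (ha : a ≤ (k - j) + (ℓ - j)), a ≠ k - j →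
      ∀ x : Pt (k + ℓ - j),
        psi k ℓ j hjk hkl a ha * Theta k ℓ j hjk hkl F G x = 0) ∧
    (∀ x : Pt (k + ℓ - j),
      psi k ℓ j hjk hkl (k - j) (Nat.le_add_right _ _) * Theta k ℓ j hjk hkl F G x
        = (C1 k ℓ j * F (x.1 : ℂ) * (starRingEnd ℂ) (G (x.1 : ℂ))) •
            (dz (none : Option (Fin (k + ℓ - j))) * dzbar (none : Option (Fin (k + ℓ - j))) *
              (List.ofFn fun i : Fin (k + ℓ - j) => dz (some i) * dzbar (some i)).prod)) := by
  have hkill2 : ∀ (c d : ℂ) (X : FormAlg (Option (Fin (k + ℓ - j)))),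
      X = 0 → c • d • X = 0 := by
    intro c d X h
    rw [h, smul_zero, smul_zero]
  constructor
  · -- part 1
    intro a ha hak x
    simp only [psi, Theta]
    rw [smul_mul_assoc, mul_smul_comm, Finset.sum_mul]
    apply hkill2
    apply Finset.sum_eq_zero
    intro σ _
    rw [smul_mul_assoc]
    rcases lt_or_gt_of_ne hak with hlta | hgta
    · -- a < k - j: some dz index of ψ collides with a dz of Θ
      have hnall : ¬ ∀ (i : ℕ) (hi : i < (k - j) + (ℓ - j) - a),
          k - j ≤ (σ ⟨a + i, by omega⟩ : ℕ) := by
        intro hall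
        have := pigeonB σ (by omega) hall
        omega
      push_neg at hnall
      obtain ⟨i, hi, hib⟩ := hnall
      rw [kill_dz k ℓ j hjk hkl a ha σ i hi hib, smul_zero]
    · -- a > k - j: some dz̄ index of ψ collides with a dz̄ of Θ
      have hnall : ¬ ∀ (i : ℕ) (hi : i < a), (σ ⟨i, by omega⟩ : ℕ) < k - j := by
        intro hall
        have := pigeonA σ (by omega) hall
        omega
      push_neg at hnall
      obtain ⟨i, hi, hib⟩ := hnall
      rw [kill_bar k ℓ j hjk hkl a ha σ i hi hib, smul_zero]
  · -- part 2
    intro x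
    simp only [psi, Theta]
    rw [smul_mul_assoc, mul_smul_comm, Finset.sum_mul]
    rw [← Finset.sum_filter_of_ne
      (p := fun σ : Equiv.Perm (Fin ((k - j) + (ℓ - j))) =>
        ∀ q : Fin ((k - j) + (ℓ - j)), (q : ℕ) < k - j → (σ q : ℕ) < k - j)
      (by
        intro σ _ hne
        by_contra hnb
        push_neg at hnb
        obtain ⟨q, hqlt, hqge⟩ := hnb
        apply hne
        have hge : k - j ≤ (σ ⟨(q : ℕ), by have := q.isLt; omega⟩ : ℕ) := hqge
        rw [smul_mul_assoc,
          kill_bar k ℓ j hjk hkl (k - j) (Nat.le_add_right _ _) σ (q : ℕ) hqlt hge,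
          smul_zero])]
    have hterm : ∀ σ ∈ Finset.univ.filter
        (fun σ : Equiv.Perm (Fin ((k - j) + (ℓ - j))) =>
          ∀ q : Fin ((k - j) + (ℓ - j)), (q : ℕ) < k - j → (σ q : ℕ) < k - j),
        (((Equiv.Perm.sign σ : ℤ) : ℂ) •
          ((List.ofFn fun i : Fin (k - j) =>
              dzbar (some (zetaIdx k ℓ j hjk hkl (σ ⟨(i : ℕ), by have := i.2; omega⟩)))).prod *
           (List.ofFn fun i : Fin ((k - j) + (ℓ - j) - (k - j)) =>
              dz (some (zetaIdx k ℓ j hjk hkl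
                (σ ⟨(k - j) + (i : ℕ), by have := i.2; omega⟩)))).prod)) *
        (dz (none : Option (Fin (k + ℓ - j))) * dzbar (none : Option (Fin (k + ℓ - j))) *
          (List.ofFn fun i : Fin k =>
            dz (some (⟨(i : ℕ), by have := i.2; omega⟩ : Fin (k + ℓ - j)))).prod *
          (List.ofFn fun i : Fin ℓ =>
            dzbar (some (⟨(k - j) + (i : ℕ), by have := i.2; omega⟩ : Fin (k + ℓ - j)))).prod)
        = ((List.ofFn fun p : Fin (k - j) =>
              dzbar (some (⟨(p : ℕ), by have := p.2; omega⟩ : Fin (k + ℓ - j)))).prod *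
           (List.ofFn fun p : Fin (ℓ - j) =>
              dz (some (⟨k + (p : ℕ), by have := p.2; omega⟩ : Fin (k + ℓ - j)))).prod) *
          (dz (none : Option (Fin (k + ℓ - j))) * dzbar (none : Option (Fin (k + ℓ - j))) *
            (List.ofFn fun i : Fin k =>
              dz (some (⟨(i : ℕ), by have := i.2; omega⟩ : Fin (k + ℓ - j)))).prod *
            (List.ofFn fun i : Fin ℓ =>
              dzbar (some (⟨(k - j) + (i : ℕ), by have := i.2; omega⟩ : Fin (k + ℓ - j)))).prod) := by
      intro σ hσ
      simp only [Finset.mem_filter, Finset.mem_univ, true_and] at hσ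
      rw [psiprod_block k ℓ j hjk hkl σ hσ, smul_mul_assoc, smul_mul_assoc, smul_smul,
        show ((Equiv.Perm.sign σ : ℤ) : ℂ) * ((Equiv.Perm.sign σ : ℤ) : ℂ) = 1 from by
          rw [← Int.cast_mul, ← Units.val_mul, Int.units_mul_self, Units.val_one, Int.cast_one],
        one_smul]
    rw [Finset.sum_congr rfl hterm, Finset.sum_const, card_block (k - j) (ℓ - j),
      base_reorder k ℓ j hjk hkl]
    rw [← Nat.cast_smul_eq_nsmul ℂ, smul_smul, smul_smul, smul_smul]
    congr 1
    simp only [C1]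
    obtain ⟨K, rfl⟩ : ∃ K, k = K + j := ⟨k - j, by omega⟩
    obtain ⟨L, rfl⟩ : ∃ L, ℓ = L + j := ⟨ℓ - j, by omega⟩
    simp only [Nat.add_sub_cancel]
    simp only [show K + j + (L + j) - j = K + j + L from by omega]
    have hpow : ((-1 : ℂ)) ^ (K + j + (L + j) + 1)
          * (-1) ^ (K * (L + (K + j)) + L * (K + j) + (K + j + L) * ((K + j + L) - 1) / 2)
        = (-1) ^ (K + j + (L + j) + 1 + K ^ 2 + j * (K + L)
            + (K + j + L) * ((K + j + L) - 1) / 2) := by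
      rw [← pow_add,
        show (K + j + (L + j) + 1) + (K * (L + (K + j)) + L * (K + j)
            + (K + j + L) * ((K + j + L) - 1) / 2)
          = (K + j + (L + j) + 1 + K ^ 2 + j * (K + L)
            + (K + j + L) * ((K + j + L) - 1) / 2) + 2 * (K * L) from by ring,
        pow_add, pow_mul, neg_one_sq, one_pow, mul_one]
    rw [← hpow]
    have hc : (((K + L).factorial : ℂ)) ≠ 0 := Nat.cast_ne_zero.mpr (Nat.factorial_ne_zero _)
    push_cast
    field_simp
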